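/- arXiv:cs/0702053 — 4 statements merged into one kernel-verified Lean document; each statement's English description precedes it below -/
import Mathlib

section
/- If D and D' are minimized DFAs over the same alphabet whose languages are finitely different, then their infinite parts are isomorphic: there exists a bijection f from I(D) to I(D') such that for all q ∈ I(D), q is accepting iff f(q) is accepting, and for all q ∈ I(D) and c ∈ Σ, f(δ(q,c)) = δ'(f(q),c). -/
open Set

/-- Symmetric difference of two languages, as a set of words. -/
def symmDiffL {α : Type} (L L' : Language α) : Set (List α) :=
  {w | (w ∈ L ∧ w ∉ L') ∨ (w ∈ L' ∧ w ∉ L)}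

/-- Two languages are finitely different if their symmetric difference is finite. -/
def FinDiff {α : Type} (L L' : Language α) : Prop := (symmDiffL L L').Finite

/-- The set of words that drive the DFA from its start state to state `q`. -/
def DFA.reachedBy {α σ : Type} (D : DFA α σ) (q : σ) : Set (List α) :=
  {w | D.eval w = q}

/-- The infinite part of a DFA: states reached by infinitely many words. -/
def DFA.infinitePart {α σ : Type} (D : DFA α σ) : Set σ :=
  {q | (D.reachedBy q).Infinite}

/-- The finite part of a DFA: states reached by only finitely many words. -/
def DFA.finitePart {α σ : Type} (D : DFA α σ) : Set σ :=
  {q | (D.reachedBy q).Finite}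

/-- The language induced by state `q` of DFA `D`. -/
def DFA.langOf {α σ : Type} (D : DFA α σ) (q : σ) : Language α :=
  {w | D.evalFrom q w ∈ D.accept}

/-- A DFA is minimized if all states are reachable and distinct states
induce distinct languages. -/
def DFA.Minimized {α σ : Type} (D : DFA α σ) : Prop :=
  (∀ q, ∃ w, D.eval w = q) ∧ ∀ p q : σ, D.langOf p = D.langOf q → p = q

/-- Two DFAs have isomorphic infinite parts. -/
def InfIso {α σ σ' : Type} (D : DFA α σ) (D' : DFA α σ') : Prop :=
  ∃ f : σ → σ', Set.BijOn f D.infinitePart D'.infinitePart ∧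
    (∀ q ∈ D.infinitePart, q ∈ D.accept ↔ f q ∈ D'.accept) ∧
    (∀ q ∈ D.infinitePart, ∀ c : α, f (D.step q c) = D'.step (f q) c)

/-- `S(D)`: the set of finite-difference classes of languages induced by states of `D`,
each class represented as the set of languages finitely different from the inducing one. -/
def SClasses {α σ : Type} (D : DFA α σ) : Set (Set (Language α)) :=
  {C | ∃ q : σ, C = {L | FinDiff (D.langOf q) L}}

/-- A DFA is f-minimal if no DFA recognizing a finitely different language has
fewer states. -/
def FMinimal {α σ : Type} [Fintype σ] (D : DFA α σ) : Prop :=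
  ∀ (σ' : Type) (_ : Fintype σ') (D' : DFA α σ'),
    FinDiff D.accepts D'.accepts → Fintype.card σ ≤ Fintype.card σ'

lemma finDiff_comm {α : Type} {L L' : Language α} (h : FinDiff L L') : FinDiff L' L := by
  have : symmDiffL L' L = symmDiffL L L' := by ext w; simp [symmDiffL]; tauto
  rw [FinDiff, this]; exact h

lemma step_mem_infinitePart {α σ : Type} (D : DFA α σ) {q : σ}
    (hq : q ∈ D.infinitePart) (c : α) : D.step q c ∈ D.infinitePart := by
  have hinj : Set.InjOn (fun w => w ++ [c]) (D.reachedBy q) := fun a _ b _ hab => by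
    simpa using hab
  have himg : (fun w => w ++ [c]) '' D.reachedBy q ⊆ D.reachedBy (D.step q c) := by
    rintro _ ⟨w, hw, rfl⟩
    simp only [DFA.reachedBy, Set.mem_setOf_eq] at hw ⊢
    rw [DFA.eval, DFA.evalFrom_of_append, ← DFA.eval]
    rw [hw]; rfl
  exact (hq.image hinj).mono himg

lemma exists_match {α σ σ' : Type} (D : DFA α σ) (D' : DFA α σ')
    (hD' : D'.Minimized) (h : FinDiff D.accepts D'.accepts) :
    ∀ q ∈ D.infinitePart, ∃ q' ∈ D'.infinitePart, D'.langOf q' = D.langOf q := by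
  intro q hq
  set S := symmDiffL D.accepts D'.accepts with hS
  set P : Set (List α) := {w | ∃ v ∈ S, w <+: v} with hP
  have hPfin : P.Finite := by
    have hsub : P ⊆ ⋃ v ∈ S, {w | w <+: v} := by
      rintro w ⟨v, hv, hpre⟩
      exact Set.mem_biUnion hv hpre
    exact ((h.biUnion (fun v _ => (v.inits.finite_toSet).subset
      (fun w hw => (List.mem_inits _ _).mpr hw)))).subset hsub
  have key : ∀ w ∉ P, D'.langOf (D'.eval w) = D.langOf (D.eval w) := by
    intro w hw
    ext x
    have h1 : (x ∈ D.langOf (D.eval w)) ↔ (w ++ x ∈ D.accepts) := by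
      simp only [DFA.langOf, DFA.mem_accepts, DFA.eval, DFA.evalFrom_of_append]; exact Iff.rfl
    have h2 : (x ∈ D'.langOf (D'.eval w)) ↔ (w ++ x ∈ D'.accepts) := by
      simp only [DFA.langOf, DFA.mem_accepts, DFA.eval, DFA.evalFrom_of_append]; exact Iff.rfl
    rw [h1, h2]
    by_contra hcon
    apply hw
    refine ⟨w ++ x, ?_, ⟨x, rfl⟩⟩
    simp only [hS, symmDiffL, Set.mem_setOf_eq]
    tauto
  have hdiff : (D.reachedBy q \ P).Infinite := hq.diff hPfin
  obtain ⟨w, hwq, hwP⟩ := hdiff.nonempty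
  refine ⟨D'.eval w, ?_, ?_⟩
  · apply hdiff.mono
    rintro u ⟨huq, huP⟩
    show D'.eval u = D'.eval w
    apply hD'.2
    rw [key u huP, key w hwP]
    show D.langOf (D.eval u) = D.langOf (D.eval w)
    rw [show D.eval u = q from huq, show D.eval w = q from hwq]
  · rw [key w hwP, show D.eval w = q from hwq]

lemma exists_fun {α σ σ' : Type} [Nonempty σ'] (D : DFA α σ) (D' : DFA α σ')
    (hD' : D'.Minimized) (h : FinDiff D.accepts D'.accepts) :
    ∃ f : σ → σ', ∀ q ∈ D.infinitePart,
      f q ∈ D'.infinitePart ∧ D'.langOf (f q) = D.langOf q := by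
  classical
  refine ⟨fun q => if hx : ∃ p, D'.langOf p = D.langOf q then hx.choose
    else Classical.arbitrary σ', ?_⟩
  intro q hq
  obtain ⟨q', hq'I, hlang⟩ := exists_match D D' hD' h q hq
  have hx : ∃ p, D'.langOf p = D.langOf q := ⟨q', hlang⟩
  have heq : hx.choose = q' := hD'.2 _ _ (hx.choose_spec.trans hlang.symm)
  simp only [dif_pos hx, heq]
  exact ⟨hq'I, hlang⟩

lemma langOf_step {α σ : Type} (D : DFA α σ) (q : σ) (c : α) :
    D.langOf (D.step q c) = {x | c :: x ∈ D.langOf q} := rfl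

/-- Minimized DFAs of finitely different languages have
isomorphic infinite parts. -/
theorem infIso_of_finDiff {α σ σ' : Type} [Fintype σ] [Fintype σ']
    (D : DFA α σ) (D' : DFA α σ')
    (hD : D.Minimized) (hD' : D'.Minimized)
    (h : FinDiff D.accepts D'.accepts) :
    InfIso D D' := by
  have hne : Nonempty σ' := ⟨D'.start⟩
  have hne2 : Nonempty σ := ⟨D.start⟩
  obtain ⟨f, hf⟩ := exists_fun D D' hD' h
  obtain ⟨g, hg⟩ := exists_fun D' D hD (finDiff_comm h)
  refine ⟨f, ?_, ?_, ?_⟩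
  · have hfm : Set.MapsTo f D.infinitePart D'.infinitePart := fun q hq => (hf q hq).1
    have hgm : Set.MapsTo g D'.infinitePart D.infinitePart := fun q hq => (hg q hq).1
    have hinv : Set.InvOn g f D.infinitePart D'.infinitePart := by
      constructor
      · intro q hq
        exact hD.2 _ _ (((hg _ (hf q hq).1).2).trans (hf q hq).2)
      · intro q' hq'
        exact hD'.2 _ _ (((hf _ (hg q' hq').1).2).trans (hg q' hq').2)
    exact hinv.bijOn hfm hgm
  · intro q hq
    have h0 : (([] : List α) ∈ D'.langOf (f q)) ↔ (([] : List α) ∈ D.langOf q) := by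
      rw [(hf q hq).2]
    exact h0.symm
  · intro q hq c
    apply hD'.2
    rw [(hf _ (step_mem_infinitePart D hq c)).2, langOf_step D q c,
      langOf_step D' (f q) c, (hf q hq).2]
end

section
/- There exist minimized DFAs D and D' with isomorphic infinite parts whose languages are not finitely different. Concretely, the minimal DFAs for the languages 0* and 10* over alphabet {0,1} have isomorphic infinite parts, but 0* △ 10* is infinite. -/
open Set

/-!
Both languages are recognised by DFAs whose infinite part is the same two-state automaton: an
accepting state looping on `0` and a dead state, matched by `Fin.succ`. The automaton for `10*`
only adds a start state that is never re-entered, so it lies in the finite part. The infinite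
parts thus cannot see the difference, while `0ⁿ ∈ 0* \ 10*` for every `n`.
-/

namespace DFA

variable {α σ : Type} (D : DFA α σ)

theorem evalFrom_of_step_eq_self {s : σ} (hs : ∀ c, D.step s c = s) (w : List α) :
    D.evalFrom s w = s := by
  induction w with
  | nil => rfl
  | cons c t ih => rw [evalFrom_cons, hs, ih]

theorem evalFrom_eq_self_iff {q s : σ} {a : α} (hqs : q ≠ s) (hloop : D.step q a = q)
    (hexit : ∀ b, b ≠ a → D.step q b = s) (hs : ∀ c, D.step s c = s) (w : List α) :
    D.evalFrom q w = q ↔ ∀ c ∈ w, c = a := by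
  induction w with
  | nil => simp
  | cons c t ih =>
    by_cases hc : c = a
    · simp [evalFrom_cons, hc, hloop, ih]
    · simp [evalFrom_cons, hexit c hc, D.evalFrom_of_step_eq_self hs, hqs.symm, hc]

theorem mem_infinitePart_of_step_eq_self {q : σ} {a : α} {w : List α} (hw : D.eval w = q)
    (hloop : D.step q a = q) : q ∈ D.infinitePart := by
  have hreach : ∀ n, D.eval (w ++ List.replicate n a) = q := by
    intro n
    induction n with
    | zero => simpa using hw
    | succ n ih => rw [List.replicate_succ', ← List.append_assoc, eval_append_singleton, ih, hloop]
  exact Set.infinite_of_injective_forall_mem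
    ((List.append_right_injective w).comp (List.replicate_left_injective a)) hreach

theorem eval_eq_start_iff {w : List α} (h : ∀ q c, D.step q c ≠ D.start) :
    D.eval w = D.start ↔ w = [] := by
  refine ⟨fun hw => ?_, fun hw => hw ▸ rfl⟩
  rcases List.eq_nil_or_concat w with rfl | ⟨v, c, rfl⟩
  · rfl
  · exact absurd hw (by rw [List.concat_eq_append, eval_append_singleton]; exact h _ _)

theorem start_notMem_infinitePart (h : ∀ q c, D.step q c ≠ D.start) :
    D.start ∉ D.infinitePart := by
  simp [infinitePart, reachedBy, D.eval_eq_start_iff h]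

end DFA

theorem not_finDiff_of_infinite_diff {α : Type} {L L' : Language α}
    (h : {w | w ∈ L ∧ w ∉ L'}.Infinite) : ¬ FinDiff L L' :=
  fun hfin => h (hfin.subset fun _ hw => Or.inl hw)

theorem not_finDiff_zeroStar_oneZeroStar :
    ¬ FinDiff ({w | ∀ c ∈ w, c = 0} : Language (Fin 2)) {w | ∃ t, w = 1 :: t ∧ ∀ c ∈ t, c = 0} := by
  refine not_finDiff_of_infinite_diff <| Set.infinite_of_injective_forall_mem
    (List.replicate_left_injective (0 : Fin 2)) fun n => ⟨fun _ => List.eq_of_mem_replicate, ?_⟩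
  rintro ⟨t, ht, -⟩
  exact absurd (List.eq_of_mem_replicate (ht ▸ List.mem_cons_self)) (by decide)

-- Row `q`, column `c` of the table is the successor of state `q` on letter `c`.
def zeroStarDFA : DFA (Fin 2) (Fin 2) where
  step q c := ![![0, 1], ![1, 1]] q c
  start := 0
  accept := {0}

def oneZeroStarDFA : DFA (Fin 2) (Fin 3) where
  step q c := ![![2, 1], ![1, 2], ![2, 2]] q c
  start := 0
  accept := {1}

theorem zeroStarDFA_minimized : zeroStarDFA.Minimized := by
  refine ⟨fun q => ?_, fun p q h => ?_⟩
  · fin_cases q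
    exacts [⟨[], rfl⟩, ⟨[1], rfl⟩]
  · have hnil : p = 0 ↔ q = 0 := Set.ext_iff.mp h []
    clear h
    revert p q
    decide

theorem oneZeroStarDFA_minimized : oneZeroStarDFA.Minimized := by
  refine ⟨fun q => ?_, fun p q h => ?_⟩
  · fin_cases q
    exacts [⟨[], rfl⟩, ⟨[1], rfl⟩, ⟨[0], rfl⟩]
  · have hnil : p = 1 ↔ q = 1 := Set.ext_iff.mp h []
    have hone : oneZeroStarDFA.step p 1 = 1 ↔ oneZeroStarDFA.step q 1 = 1 := Set.ext_iff.mp h [1]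
    clear h
    revert p q
    decide

theorem zeroStarDFA_evalFrom_zero_eq_zero_iff (w : List (Fin 2)) :
    zeroStarDFA.evalFrom 0 w = 0 ↔ ∀ c ∈ w, c = 0 :=
  zeroStarDFA.evalFrom_eq_self_iff (s := 1) (by decide) rfl (by decide) (by decide) w

theorem oneZeroStarDFA_evalFrom_one_eq_one_iff (w : List (Fin 2)) :
    oneZeroStarDFA.evalFrom 1 w = 1 ↔ ∀ c ∈ w, c = 0 :=
  oneZeroStarDFA.evalFrom_eq_self_iff (s := 2) (by decide) rfl (by decide) (by decide) w

theorem zeroStarDFA_accepts : zeroStarDFA.accepts = {w : List (Fin 2) | ∀ c ∈ w, c = 0} :=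
  Set.ext zeroStarDFA_evalFrom_zero_eq_zero_iff

theorem oneZeroStarDFA_accepts :
    oneZeroStarDFA.accepts = {w : List (Fin 2) | ∃ t, w = 1 :: t ∧ ∀ c ∈ t, c = 0} := by
  ext w
  change oneZeroStarDFA.evalFrom 0 w = 1 ↔ ∃ t, w = 1 :: t ∧ ∀ c ∈ t, c = 0
  rcases w with _ | ⟨c, t⟩
  · simp
  · fin_cases c
    · change oneZeroStarDFA.evalFrom 2 t = 1 ↔ _
      rw [oneZeroStarDFA.evalFrom_of_step_eq_self (by decide)]
      simp
    · change oneZeroStarDFA.evalFrom 1 t = 1 ↔ _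
      simp [oneZeroStarDFA_evalFrom_one_eq_one_iff]

theorem zeroStarDFA_infinitePart : zeroStarDFA.infinitePart = Set.univ := by
  refine Set.eq_univ_of_forall fun q => ?_
  fin_cases q
  exacts [zeroStarDFA.mem_infinitePart_of_step_eq_self (w := []) (a := 0) rfl rfl,
    zeroStarDFA.mem_infinitePart_of_step_eq_self (w := [1]) (a := 0) rfl rfl]

theorem oneZeroStarDFA_infinitePart : oneZeroStarDFA.infinitePart = {0}ᶜ := by
  refine Set.Subset.antisymm (fun q hq h0 => ?_) fun q hq => ?_
  · obtain rfl : q = 0 := h0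
    exact oneZeroStarDFA.start_notMem_infinitePart (by decide) hq
  · fin_cases q
    · exact absurd rfl hq
    · exact oneZeroStarDFA.mem_infinitePart_of_step_eq_self (w := [1]) (a := 0) rfl rfl
    · exact oneZeroStarDFA.mem_infinitePart_of_step_eq_self (w := [0]) (a := 0) rfl rfl

theorem infIso_zeroStarDFA_oneZeroStarDFA : InfIso zeroStarDFA oneZeroStarDFA := by
  refine ⟨Fin.succ, ?_, fun q _ => ?_, fun q _ c => ?_⟩
  · rw [zeroStarDFA_infinitePart, oneZeroStarDFA_infinitePart, ← Fin.range_succ, ← Set.image_univ]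
    exact (Fin.succ_injective _).injOn.bijOn_image
  · show q = 0 ↔ q.succ = 1
    fin_cases q <;> decide
  · fin_cases q <;> fin_cases c <;> rfl

/-- The converse of the infinite part isomorphism theorem fails:
the minimal DFAs of `0*` and `10*` have isomorphic infinite parts but their
languages are not finitely different. -/
theorem infIso_not_finDiff :
    ∃ (σ σ' : Type) (_ : Fintype σ) (_ : Fintype σ')
      (D : DFA (Fin 2) σ) (D' : DFA (Fin 2) σ'),
      D.Minimized ∧ D'.Minimized ∧
      D.accepts = {w : List (Fin 2) | ∀ c ∈ w, c = 0} ∧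
      D'.accepts = {w : List (Fin 2) | ∃ t, w = 1 :: t ∧ ∀ c ∈ t, c = 0} ∧
      InfIso D D' ∧ ¬ FinDiff D.accepts D'.accepts :=
  ⟨Fin 2, Fin 3, inferInstance, inferInstance, zeroStarDFA, oneZeroStarDFA,
    zeroStarDFA_minimized, oneZeroStarDFA_minimized, zeroStarDFA_accepts, oneZeroStarDFA_accepts,
    infIso_zeroStarDFA_oneZeroStarDFA,
    zeroStarDFA_accepts ▸ oneZeroStarDFA_accepts ▸ not_finDiff_zeroStar_oneZeroStar⟩
end

section
/- If DFAs D and D' (over the same alphabet, with all states reachable) recognize finitely different languages, then S(D) = S(D'), where S(D) is the set of finite-difference equivalence classes of the languages induced by the states of D. -/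
open Set

/-! The state reached by `w` induces the left quotient `w⁻¹ L` of the accepted language, and
taking left quotients by a fixed word preserves finite difference (the quotient map `u ↦ w ++ u`
is injective). Every state being reachable, each class in `S(D)` is the class of some `w⁻¹ L(D)`,
hence of `w⁻¹ L(D')`, which is induced by the state of `D'` reached by `w`. -/

section FinDiff

variable {α : Type}

theorem FinDiff.symm {L L' : Language α} (h : FinDiff L L') : FinDiff L' L :=
  h.subset fun _ hw => hw.symm

theorem FinDiff.trans {L M N : Language α} (hLM : FinDiff L M) (hMN : FinDiff M N) :
    FinDiff L N :=
  (hLM.union hMN).subset (symmDiff_triangle (α := Set (List α)) L M N)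

theorem FinDiff.preimage_append {L L' : Language α} (h : FinDiff L L') (w : List α) :
    FinDiff ((w ++ ·) ⁻¹' L) ((w ++ ·) ⁻¹' L') :=
  (Set.preimage_symmDiff (f := (w ++ ·)) (s := L) (t := L')).subst (motive := Set.Finite)
    (h.preimage (List.append_right_injective w).injOn)

theorem setOf_finDiff_eq {L L' : Language α} (h : FinDiff L L') :
    {M | FinDiff L M} = {M | FinDiff L' M} :=
  Set.ext fun _ => ⟨h.symm.trans, h.trans⟩

end FinDiff

section DFA

variable {α σ σ' : Type}

theorem DFA.langOf_eval (D : DFA α σ) (w : List α) :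
    D.langOf (D.eval w) = (w ++ ·) ⁻¹' D.accepts := by
  ext u
  exact iff_of_eq (congrArg (· ∈ D.accept) (D.evalFrom_of_append D.start w u).symm)

theorem DFA.finDiff_langOf_eval {D : DFA α σ} {D' : DFA α σ'}
    (h : FinDiff D.accepts D'.accepts) (w : List α) :
    FinDiff (D.langOf (D.eval w)) (D'.langOf (D'.eval w)) := by
  rw [D.langOf_eval, D'.langOf_eval]
  exact h.preimage_append w

theorem sClasses_subset_of_finDiff {D : DFA α σ} {D' : DFA α σ'}
    (hreach : ∀ q : σ, ∃ w, D.eval w = q) (h : FinDiff D.accepts D'.accepts) :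
    SClasses D ⊆ SClasses D' := by
  rintro _ ⟨q, rfl⟩
  obtain ⟨w, rfl⟩ := hreach q
  exact ⟨D'.eval w, setOf_finDiff_eq (DFA.finDiff_langOf_eval h w)⟩

end DFA

theorem sClasses_eq_of_finDiff_general {α σ σ' : Type}
    (D : DFA α σ) (D' : DFA α σ')
    (hreach : ∀ q : σ, ∃ w, D.eval w = q)
    (hreach' : ∀ q : σ', ∃ w, D'.eval w = q)
    (h : FinDiff D.accepts D'.accepts) :
    SClasses D = SClasses D' :=
  (sClasses_subset_of_finDiff hreach h).antisymm (sClasses_subset_of_finDiff hreach' h.symm)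

/-- Finitely different DFAs have the same set of state-classes. -/
theorem sClasses_eq_of_finDiff {α σ σ' : Type} [Fintype σ] [Fintype σ']
    (D : DFA α σ) (D' : DFA α σ')
    (hreach : ∀ q : σ, ∃ w, D.eval w = q)
    (hreach' : ∀ q : σ', ∃ w, D'.eval w = q)
    (h : FinDiff D.accepts D'.accepts) :
    SClasses D = SClasses D' :=
  sClasses_eq_of_finDiff_general D D' hreach hreach' h
end

section
/- For any finite set of words W over an alphabet Σ with |Σ| ≥ 2, there exist DFAs D and D' with empty finite parts (every state is reached by infinitely many words) such that L(D) △ L(D') = W. -/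
open Set

noncomputable section AuxConstruction
open Classical

variable {α : Type}

abbrev AuxStt (α : Type) (n : ℕ) := {l : List α // l.length ≤ n} × Bool

noncomputable def auxDFA (n : ℕ) (a : α) (W : Set (List α)) (i : Bool) :
    DFA α (AuxStt α n) where
  step q c :=
    if h : q.1.val.length < n then (⟨q.1.val ++ [c], by simpa using h⟩, q.2)
    else (⟨[], Nat.zero_le n⟩, if c = a then true else false)
  start := (⟨[], Nat.zero_le n⟩, i)
  accept := {q | q.1.val ∈ W ∧ q.2 = true}

lemma aux_evalFrom_short (n : ℕ) (a : α) (W : Set (List α)) (i j : Bool) :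
    ∀ (u w : List α) (h : (w ++ u).length ≤ n) (hw : w.length ≤ n),
      (auxDFA n a W j).evalFrom (⟨w, hw⟩, i) u = (⟨w ++ u, h⟩, i) := by
  intro u
  induction u with
  | nil => intro w h hw; simp [DFA.evalFrom]
  | cons c u ih =>
    intro w h hw
    have hlt : w.length < n := by
      have := h; simp at this; omega
    have h' : ((w ++ [c]) ++ u).length ≤ n := by simpa using h
    have hstep : (auxDFA n a W j).evalFrom (⟨w, hw⟩, i) (c :: u)
        = (auxDFA n a W j).evalFrom ((auxDFA n a W j).step (⟨w, hw⟩, i) c) u := rfl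
    rw [hstep]
    have hs : (auxDFA n a W j).step (⟨w, hw⟩, i) c
        = (⟨w ++ [c], by simpa using hlt⟩, i) := by
      simp [auxDFA, hlt]
    rw [hs, ih (w ++ [c]) h' (by simpa using hlt)]
    simp

lemma aux_evalFrom_fold (n : ℕ) (a : α) (W : Set (List α)) (i j : Bool)
    (x : List α) (hne : x ≠ []) (hx : x.length = n + 1) :
    (auxDFA n a W j).evalFrom (⟨[], Nat.zero_le n⟩, i) x
        = (⟨[], Nat.zero_le n⟩, if x.getLast hne = a then true else false) := by
  have hxd : x.dropLast ++ [x.getLast hne] = x := List.dropLast_append_getLast hne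
  have hdl : x.dropLast.length = n := by
    have : x.dropLast.length = x.length - 1 := List.length_dropLast; omega
  conv_lhs => rw [← hxd]
  rw [DFA.evalFrom_append_singleton]
  have h0 : (([] : List α) ++ x.dropLast).length ≤ n := by simpa using hdl.le
  rw [aux_evalFrom_short n a W i j x.dropLast [] h0 (Nat.zero_le n)]
  show (auxDFA n a W j).step (⟨[] ++ x.dropLast, h0⟩, i) (x.getLast hne) = _
  have : ¬ (([] : List α) ++ x.dropLast).length < n := by simp [hdl]
  simp [auxDFA, this]
  omega

lemma aux_eval_long (n : ℕ) (a : α) (W : Set (List α)) (i i' : Bool)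
    (u : List α) (hu : n < u.length) :
    (auxDFA n a W i).eval u = (auxDFA n a W i').eval u := by
  have hsplit : u.take (n+1) ++ u.drop (n+1) = u := List.take_append_drop _ _
  have hlen : (u.take (n+1)).length = n + 1 := by
    simp [List.length_take]; omega
  have hne : u.take (n+1) ≠ [] := by
    intro h; rw [h] at hlen; simp at hlen
  show (auxDFA n a W i).evalFrom _ u = (auxDFA n a W i').evalFrom _ u
  conv_lhs => rw [← hsplit]
  conv_rhs => rw [← hsplit]
  rw [DFA.evalFrom_of_append, DFA.evalFrom_of_append]
  show (auxDFA n a W i).evalFrom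
      ((auxDFA n a W i).evalFrom (⟨[], Nat.zero_le n⟩, i) _) _
    = (auxDFA n a W i').evalFrom
      ((auxDFA n a W i').evalFrom (⟨[], Nat.zero_le n⟩, i') _) _
  rw [aux_evalFrom_fold n a W i i _ hne hlen, aux_evalFrom_fold n a W i' i' _ hne hlen]
  rfl

lemma aux_eval_rep (n : ℕ) (a b : α) (hab : b ≠ a) (W : Set (List α)) (j : Bool)
    (t : Bool) :
    ∀ (k : ℕ) (i : Bool),
      (auxDFA n a W j).evalFrom (⟨[], Nat.zero_le n⟩, i)
        (List.replicate ((k+1)*(n+1)) (if t then a else b))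
        = (⟨[], Nat.zero_le n⟩, t) := by
  have base : ∀ i : Bool, (auxDFA n a W j).evalFrom (⟨[], Nat.zero_le n⟩, i)
      (List.replicate (n+1) (if t then a else b)) = (⟨[], Nat.zero_le n⟩, t) := by
    intro i
    have hne : (List.replicate (n+1) (if t then a else b)) ≠ [] := by simp
    rw [aux_evalFrom_fold n a W i j _ hne (by simp)]
    congr 1
    have hgl : (List.replicate (n+1) (if t then a else b)).getLast hne
        = (if t then a else b) := by simp
    rw [hgl]
    cases t <;> simp [hab]
  intro k
  induction k with
  | zero => intro i; simpa using base i
  | succ k ih =>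
    intro i
    have h2 : (k+1+1)*(n+1) = (n+1) + (k+1)*(n+1) := by ring
    rw [h2, List.replicate_add, DFA.evalFrom_of_append, base i, ih t]

lemma aux_finitePart_empty (n : ℕ) (a b : α) (hab : b ≠ a) (W : Set (List α))
    (j : Bool) : (auxDFA n a W j).finitePart = ∅ := by
  ext q
  simp only [DFA.finitePart, Set.mem_setOf_eq, Set.mem_empty_iff_false, iff_false]
  obtain ⟨⟨w, hw⟩, t⟩ := q
  intro hfin
  apply Set.infinite_of_injective_forall_mem
    (f := fun k : ℕ => List.replicate ((k+1)*(n+1)) (if t then a else b) ++ w)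
    (s := (auxDFA n a W j).reachedBy (⟨w, hw⟩, t)) ?_ ?_ hfin
  · intro k k' hkk
    have := congrArg List.length hkk
    simp at this
    omega
  · intro k
    show (auxDFA n a W j).eval _ = _
    show (auxDFA n a W j).evalFrom _ _ = _
    rw [DFA.evalFrom_of_append]
    show (auxDFA n a W j).evalFrom
        ((auxDFA n a W j).evalFrom (⟨[], Nat.zero_le n⟩, j) _) _ = _
    rw [aux_eval_rep n a b hab W j t k j,
      aux_evalFrom_short n a W t j w [] (by simpa using hw) (Nat.zero_le n)]
    simp

end AuxConstruction

/-- For any finite set of words over an alphabet with at least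
two characters, there are DFAs with empty finite parts whose languages have
exactly that symmetric difference. -/
theorem exists_emptyFinitePart_symmDiff {α : Type} [Fintype α]
    (hα : ∃ a b : α, a ≠ b) (W : Set (List α)) (hW : W.Finite) :
    ∃ (σ σ' : Type) (_ : Fintype σ) (_ : Fintype σ')
      (D : DFA α σ) (D' : DFA α σ'),
      D.finitePart = ∅ ∧ D'.finitePart = ∅ ∧
      symmDiffL D.accepts D'.accepts = W := by
  classical
  obtain ⟨a, b, hab⟩ := hα
  set n := hW.toFinset.sup List.length with hn
  have hWlen : ∀ w ∈ W, w.length ≤ n := by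
    intro w hw
    exact Finset.le_sup (by simpa using hw)
  haveI : Fintype {l : List α // l.length ≤ n} := (List.finite_length_le α n).fintype
  refine ⟨AuxStt α n, AuxStt α n, inferInstance, inferInstance,
    auxDFA n a W false, auxDFA n a W true,
    aux_finitePart_empty n a b hab.symm W false,
    aux_finitePart_empty n a b hab.symm W true, ?_⟩
  ext u
  simp only [symmDiffL, Set.mem_setOf_eq, DFA.mem_accepts]
  by_cases hu : u.length ≤ n
  · have h0 : (([] : List α) ++ u).length ≤ n := by simpa using hu
    have e0 : (auxDFA n a W false).eval u = (⟨[] ++ u, h0⟩, false) :=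
      aux_evalFrom_short n a W false false u [] h0 (Nat.zero_le n)
    have e1 : (auxDFA n a W true).eval u = (⟨[] ++ u, h0⟩, true) :=
      aux_evalFrom_short n a W true true u [] h0 (Nat.zero_le n)
    rw [e0, e1]
    simp [auxDFA]
  · push_neg at hu
    have heq := aux_eval_long n a W false true u hu
    rw [heq]
    constructor
    · rintro (⟨h1, h2⟩ | ⟨h1, h2⟩) <;> exact absurd h1 h2
    · intro hw
      exact absurd (hWlen u hw) (by omega)
end
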